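/- arXiv:1707.04956 — 2 statements merged into one kernel-verified Lean document; each statement's English description precedes it below -/
import Mathlib

section
/- For every p > 0, τ > 0, ν ∈ ℝ, and t > 0, the sum G_{ν,p,τ}(t) = Σ_{n≥1} n^ν 2^{pn} e^{-2^{τn} t} satisfies H_{ν,p,τ}(t) ≤ G_{ν,p,τ}(t) ≲ t^{-p/τ} ℓ(t)^ν, where H_{ν,p,τ}(t) = sup_{n≥1} n^ν 2^{pn} e^{-2^{τn} t} and ℓ(t) = log(max(1/t, 2)). -/
/-!
Put `q = p/τ` and `y = τ log 2 · x + log t`. Then `2^{px} e^{-2^{τx} t} = t^{-q} e^{qy - e^y}`, and the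
profile `e^{qy - e^y}` decays like `e^{-c|y|}` on both sides, i.e. geometrically in `|x - N(t)|` with
`N(t) = log₂(1/t)/τ`. Since `ℓ(t) ≍ max(N(t), 1)`, the factor `x^ν` is `ℓ(t)^ν` up to a power of
`1 + |x - N(t)|`, which a slightly weaker exponential absorbs. Summing the resulting two-sided geometric
series gives a bound independent of `t`; the lower bound is one term of a series of nonnegative terms.
-/

open Real

/-- Tamed logarithm `ℓ(t) = log(1/t ∨ 2)`. -/
noncomputable def tamedLog (t : ℝ) : ℝ := Real.log (max (1/t) 2)

lemma tamedLog_pos (t : ℝ) : 0 < tamedLog t :=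
  log_pos (one_lt_two.trans_le (le_max_right _ _))

lemma tamedLog_eq_max {t : ℝ} (ht : 0 < t) : tamedLog t = max (-log t) (log 2) := by
  rw [tamedLog, strictMonoOn_log.monotoneOn.map_max (by simpa using ht) (by simp), one_div,
    log_inv]

lemma mul_sub_exp_le {q : ℝ} (hq : -1 < q) (x : ℝ) :
    q * x - exp x ≤ (q + 1) * (log (q + 1) - 1) - x := by
  have hq1 : 0 < q + 1 := by linarith
  have tangent := add_one_le_exp (x - log (q + 1))
  rw [exp_sub, exp_log hq1, le_div_iff₀ hq1] at tangent
  linarith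

lemma exists_mul_sub_exp_le_sub_mul_abs {q : ℝ} (hq : 0 ≤ q) :
    ∃ K, ∀ x, q * x - exp x ≤ K - min 1 q * |x| := by
  refine ⟨max 0 ((q + 1) * (log (q + 1) - 1)), fun x => ?_⟩
  rcases le_total 0 x with hx | hx
  · have := mul_sub_exp_le (q := q) (by linarith) x
    have : min 1 q * x ≤ x := by nlinarith [min_le_left 1 q]
    rw [abs_of_nonneg hx]
    linarith [le_max_right 0 ((q + 1) * (log (q + 1) - 1))]
  · have : q * x ≤ min 1 q * x := by nlinarith [min_le_right 1 q]
    rw [abs_of_nonpos hx]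
    linarith [le_max_left 0 ((q + 1) * (log (q + 1) - 1)), exp_pos x]

lemma two_rpow_mul_exp_neg_eq {p τ t : ℝ} (hτ : 0 < τ) (ht : 0 < t) (x : ℝ) :
    (2:ℝ) ^ (p * x) * exp (-(2:ℝ) ^ (τ * x) * t) =
      t ^ (-(p / τ)) * exp (p / τ * (τ * log 2 * x + log t) - exp (τ * log 2 * x + log t)) := by
  rw [rpow_def_of_pos two_pos, rpow_def_of_pos two_pos, rpow_def_of_pos ht, exp_add _ (log t),
    exp_log ht, ← exp_add, ← exp_add]
  congr 1
  field_simp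
  ring

lemma exists_two_rpow_mul_exp_neg_le {p τ : ℝ} (hp : 0 < p) (hτ : 0 < τ) :
    ∃ K, ∀ t > 0, ∀ x, (2:ℝ) ^ (p * x) * exp (-(2:ℝ) ^ (τ * x) * t) ≤
      t ^ (-(p / τ)) * exp (K - min 1 (p / τ) * (τ * log 2) * |x + log t / (τ * log 2)|) := by
  obtain ⟨K, hK⟩ := exists_mul_sub_exp_le_sub_mul_abs (div_pos hp hτ).le
  refine ⟨K, fun t ht x => ?_⟩
  have hu : 0 < τ * log 2 := mul_pos hτ (log_pos one_lt_two)
  have hy : |τ * log 2 * x + log t| = τ * log 2 * |x + log t / (τ * log 2)| := by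
    rw [← abs_of_pos hu, ← abs_mul, abs_of_pos hu, mul_add, mul_div_cancel₀ _ hu.ne']
  have h_exponent := hK (τ * log 2 * x + log t)
  rw [hy] at h_exponent
  rw [two_rpow_mul_exp_neg_eq hτ ht x]
  exact mul_le_mul_of_nonneg_left (exp_le_exp.2 (by linarith)) (by positivity)

lemma one_add_le_inv_mul_exp {δ : ℝ} (hδ : 0 < δ) (hδ1 : δ ≤ 1) (d : ℝ) :
    1 + d ≤ δ⁻¹ * exp (δ * d) := by
  rw [le_inv_mul_iff₀ hδ]
  nlinarith [add_one_le_exp (δ * d)]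

lemma rpow_le_rpow_mul_of_le_mul {x y w : ℝ} (ν : ℝ) (hx : 0 < x) (hy : 0 < y)
    (hxy : x ≤ w * y) (hyx : y ≤ w * x) : x ^ ν ≤ w ^ |ν| * y ^ ν := by
  have hw : 0 < w := pos_of_mul_pos_left (hx.trans_le hxy) hy.le
  rcases le_total 0 ν with hν | hν
  · rw [abs_of_nonneg hν, ← mul_rpow hw.le hy.le]
    exact rpow_le_rpow hx.le hxy hν
  · rw [abs_of_nonpos hν, rpow_neg hw.le, ← div_eq_inv_mul, ← div_rpow hy.le hw.le]
    exact rpow_le_rpow_of_nonpos (div_pos hy hw) ((div_le_iff₀' hw).2 hyx) hν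

lemma le_mul_one_add_abs_sub_mul_max {b : ℝ} (hb : 0 < b) (x s : ℝ) :
    x ≤ (1 + b + b⁻¹) * (1 + |x - s|) * max s b := by
  set d := |x - s|
  set B := max s b
  have hB : 0 < B := hb.trans_le (le_max_right s b)
  have hd : 0 ≤ d := abs_nonneg _
  have hdB : d ≤ b⁻¹ * d * B := by
    calc d = b⁻¹ * d * b := by field_simp
      _ ≤ b⁻¹ * d * B := by gcongr; exact le_max_right s b
  have : 0 ≤ b * (1 + d) * B + b⁻¹ * B + d * B := by positivity
  nlinarith [le_abs_self (x - s), le_max_left s b]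

lemma max_le_mul_one_add_abs_sub_mul {b x : ℝ} (hb : 0 < b) (hx : 1 ≤ x) (s : ℝ) :
    max s b ≤ (1 + b + b⁻¹) * (1 + |x - s|) * x := by
  set d := |x - s|
  have hd : 0 ≤ d := abs_nonneg _
  have hM : (1 + d) * x ≤ (1 + b + b⁻¹) * (1 + d) * x := by
    have : 0 ≤ (b + b⁻¹) * (1 + d) * x := by positivity
    linarith
  apply max_le
  · nlinarith [neg_abs_le (x - s), mul_le_mul_of_nonneg_left hx hd]
  · have h1 : 1 ≤ (1 + d) * x := by nlinarith
    have : 0 ≤ (1 + b⁻¹) * (1 + d) * x := by positivity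
    nlinarith [mul_le_mul_of_nonneg_left h1 hb.le]

lemma rpow_le_mul_exp_mul_max_rpow {b δ : ℝ} (hb : 0 < b) (hδ : 0 < δ) (hδ1 : δ ≤ 1) (ν : ℝ)
    {x : ℝ} (hx : 1 ≤ x) (s : ℝ) :
    x ^ ν ≤ ((1 + b + b⁻¹) * δ⁻¹) ^ |ν| * exp (|ν| * δ * |x - s|) * max s b ^ ν := by
  have hw : (1 + b + b⁻¹) * (1 + |x - s|) ≤ (1 + b + b⁻¹) * δ⁻¹ * exp (δ * |x - s|) := by
    rw [mul_assoc _ δ⁻¹]; gcongr; exact one_add_le_inv_mul_exp hδ hδ1 _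
  calc x ^ ν ≤ ((1 + b + b⁻¹) * δ⁻¹ * exp (δ * |x - s|)) ^ |ν| * max s b ^ ν :=
        rpow_le_rpow_mul_of_le_mul ν (by linarith) (hb.trans_le (le_max_right _ _))
          ((le_mul_one_add_abs_sub_mul_max hb x s).trans (by gcongr))
          ((max_le_mul_one_add_abs_sub_mul hb hx s).trans (by gcongr))
    _ = ((1 + b + b⁻¹) * δ⁻¹) ^ |ν| * exp (|ν| * δ * |x - s|) * max s b ^ ν := by
        rw [mul_rpow (by positivity) (exp_pos _).le, ← exp_mul]; ring_nf

lemma exists_rpow_mul_two_rpow_mul_exp_le (ν : ℝ) {p τ : ℝ} (hp : 0 < p) (hτ : 0 < τ) :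
    ∃ D > 0, ∃ c > 0, ∀ t > 0, ∀ x ≥ 1,
      x ^ ν * (2:ℝ) ^ (p * x) * exp (-(2:ℝ) ^ (τ * x) * t) ≤
        D * t ^ (-(p / τ)) * tamedLog t ^ ν * exp (-c * |x + log t / (τ * log 2)|) := by
  set u := τ * log 2
  have hu : 0 < u := mul_pos hτ (log_pos one_lt_two)
  obtain ⟨K, profile_le⟩ := exists_two_rpow_mul_exp_neg_le hp hτ
  set c := min 1 (p / τ) * u
  have hc : 0 < c := mul_pos (lt_min one_pos (div_pos hp hτ)) hu
  set δ := min 1 (c / (2 * (|ν| + 1)))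
  have hδ : 0 < δ := lt_min one_pos (by positivity)
  have hνδ : |ν| * δ ≤ c / 2 := by
    calc |ν| * δ ≤ (|ν| + 1) * (c / (2 * (|ν| + 1))) := by
          gcongr
          · linarith
          · exact min_le_right _ _
      _ = c / 2 := by field_simp
  set M := (1 + τ⁻¹ + τ⁻¹⁻¹) * δ⁻¹
  refine ⟨M ^ |ν| * u ^ (-ν) * exp K, by positivity, c / 2, by positivity, fun t ht x hx => ?_⟩
  set s := -log t / u
  set d := |x - s|
  have hd : |x + log t / u| = d := by congr 1; simp only [s]; ring
  set B := max s τ⁻¹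
  have hℓ : tamedLog t = u * B := by
    rw [tamedLog_eq_max ht, mul_max_of_nonneg _ _ hu.le]
    congr 1
    · simp only [s]; field_simp
    · simp only [u]; field_simp
  have hx_pow : x ^ ν ≤ M ^ |ν| * exp (|ν| * δ * d) * B ^ ν :=
    rpow_le_mul_exp_mul_max_rpow (inv_pos.2 hτ) hδ (min_le_left _ _) ν hx s
  have hu_pow : u ^ (-ν) * u ^ ν = 1 := by rw [rpow_neg hu.le, inv_mul_cancel₀ (by positivity)]
  have h_profile := profile_le t ht x
  rw [hd] at h_profile
  rw [hd, mul_assoc (x ^ ν), hℓ, mul_rpow hu.le (by positivity)]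
  calc x ^ ν * ((2:ℝ) ^ (p * x) * exp (-(2:ℝ) ^ (τ * x) * t))
      ≤ (M ^ |ν| * exp (|ν| * δ * d) * B ^ ν) * (t ^ (-(p / τ)) * exp (K - c * d)) := by
        gcongr
    _ = M ^ |ν| * exp K * t ^ (-(p / τ)) * B ^ ν * exp (|ν| * δ * d + -c * d) := by
        rw [exp_add, sub_eq_add_neg, exp_add, neg_mul]; ring
    _ ≤ M ^ |ν| * exp K * t ^ (-(p / τ)) * B ^ ν * exp (-(c / 2) * d) := by
        gcongr
        nlinarith [abs_nonneg (x - s)]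
    _ = M ^ |ν| * u ^ (-ν) * exp K * t ^ (-(p / τ)) * (u ^ ν * B ^ ν) * exp (-(c / 2) * d) := by
        linear_combination (-M ^ |ν| * exp K * t ^ (-(p / τ)) * B ^ ν * exp (-(c / 2) * d)) * hu_pow

lemma exists_tsum_exp_neg_mul_abs_sub_le {c : ℝ} (hc : 0 < c) :
    ∃ S > 0, ∀ s : ℝ, Summable (fun n : ℕ => exp (-c * |n - s|)) ∧
      ∑' n : ℕ, exp (-c * |n - s|) ≤ S := by
  set h : ℤ → ℝ := fun m => exp (-c * |(m : ℝ)|)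
  have h_nat : Summable (fun n : ℕ => h n) := by
    simpa [h, mul_comm] using summable_exp_nat_mul_iff.2 (neg_neg_of_pos hc)
  have h_summable : Summable h :=
    Summable.of_nat_of_neg h_nat (by simpa [h] using h_nat)
  refine ⟨exp c * ∑' m, h m, mul_pos (exp_pos c)
    (h_summable.tsum_pos (fun _ => (exp_pos _).le) 0 (exp_pos _)), fun s => ?_⟩
  set shift : ℕ → ℤ := fun n => n - ⌊s⌋
  have shift_injective : Function.Injective shift := fun m n hmn => by simpa [shift] using hmn
  -- `|n - ⌊s⌋| ≤ |n - s| + 1`, since `s - ⌊s⌋ ∈ [0, 1)`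
  have bound (n : ℕ) : exp (-c * |n - s|) ≤ exp c * h (shift n) := by
    rw [← exp_add]
    refine exp_le_exp.2 ?_
    have := abs_sub_le (n : ℝ) s ⌊s⌋
    have : |s - ⌊s⌋| ≤ 1 := by
      rw [← Int.fract, abs_of_nonneg (Int.fract_nonneg s)]; exact (Int.fract_lt_one s).le
    simp only [shift, Int.cast_sub, Int.cast_natCast]
    nlinarith
  have shift_summable := (h_summable.comp_injective shift_injective).mul_left (exp c)
  have summable := shift_summable.of_nonneg_of_le (fun _ => (exp_pos _).le) bound
  refine ⟨summable, ?_⟩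
  calc ∑' n : ℕ, exp (-c * |n - s|) ≤ ∑' n, exp c * h (shift n) :=
        summable.tsum_le_tsum bound shift_summable
    _ = exp c * ∑' n, h (shift n) := tsum_mul_left
    _ ≤ exp c * ∑' m, h m := by
        gcongr
        exact tsum_comp_le_tsum_of_inj h_summable (fun _ => (exp_pos _).le) shift_injective

/-- For `p > 0`, `τ > 0`, `ν ∈ ℝ` and `t > 0`, with
`G_{ν,p,τ}(t) = Σ_{n≥1} n^ν 2^{pn} e^{-2^{τn}t}` and
`H_{ν,p,τ}(t) = sup_{n≥1} n^ν 2^{pn} e^{-2^{τn}t}`, the series converges and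
`H_{ν,p,τ}(t) ≤ G_{ν,p,τ}(t) ≤ C t^{-p/τ} ℓ(t)^ν`, with `C` independent of `t`. -/
theorem stmt9 (p τ ν : ℝ) (hp : 0 < p) (hτ : 0 < τ) :
    ∃ C > (0:ℝ), ∀ t > (0:ℝ),
      Summable (fun n : ℕ =>
        ((n+1 : ℕ) : ℝ) ^ ν * (2:ℝ) ^ (p * ((n:ℝ)+1)) *
          Real.exp (-(2:ℝ) ^ (τ * ((n:ℝ)+1)) * t)) ∧
      (∀ n : ℕ, 1 ≤ n →
        (n : ℝ) ^ ν * (2:ℝ) ^ (p * (n:ℝ)) * Real.exp (-(2:ℝ) ^ (τ * (n:ℝ)) * t)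
          ≤ ∑' n : ℕ, ((n+1 : ℕ) : ℝ) ^ ν * (2:ℝ) ^ (p * ((n:ℝ)+1)) *
              Real.exp (-(2:ℝ) ^ (τ * ((n:ℝ)+1)) * t)) ∧
      (∑' n : ℕ, ((n+1 : ℕ) : ℝ) ^ ν * (2:ℝ) ^ (p * ((n:ℝ)+1)) *
          Real.exp (-(2:ℝ) ^ (τ * ((n:ℝ)+1)) * t))
        ≤ C * t ^ (-(p/τ)) * tamedLog t ^ ν := by
  obtain ⟨D, hD, c, hc, term_le⟩ := exists_rpow_mul_two_rpow_mul_exp_le ν hp hτ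
  obtain ⟨S, hS, tsum_le⟩ := exists_tsum_exp_neg_mul_abs_sub_le hc
  refine ⟨D * S, mul_pos hD hS, fun t ht => ?_⟩
  set f : ℕ → ℝ := fun n => ((n+1 : ℕ) : ℝ) ^ ν * (2:ℝ) ^ (p * ((n:ℝ)+1)) *
    Real.exp (-(2:ℝ) ^ (τ * ((n:ℝ)+1)) * t)
  set s := -(log t / (τ * log 2)) - 1
  set A := D * t ^ (-(p / τ)) * tamedLog t ^ ν
  have hA : 0 ≤ A := by have := tamedLog_pos t; positivity
  obtain ⟨g_summable, g_tsum⟩ := tsum_le s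
  have f_nonneg (n : ℕ) : 0 ≤ f n := by positivity
  have f_le (n : ℕ) : f n ≤ A * exp (-c * |n - s|) := by
    have := term_le t ht (n + 1) (by linarith [n.cast_nonneg (α := ℝ)])
    convert this using 4
    · push_cast; rfl
    · congr 1; simp only [s]; ring
  have f_summable : Summable f := (g_summable.mul_left A).of_nonneg_of_le f_nonneg f_le
  refine ⟨f_summable, fun n hn => ?_, ?_⟩
  · obtain ⟨k, rfl⟩ := Nat.exists_eq_add_of_le' hn
    simpa only [f, Nat.cast_add_one] using f_summable.le_tsum k (fun i _ => f_nonneg i)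
  · calc ∑' n, f n ≤ ∑' n : ℕ, A * exp (-c * |n - s|) :=
          f_summable.tsum_le_tsum f_le (g_summable.mul_left A)
      _ = A * ∑' n : ℕ, exp (-c * |n - s|) := tsum_mul_left
      _ ≤ A * S := by gcongr
      _ = D * S * t ^ (-(p / τ)) * tamedLog t ^ ν := by ring
end

section
/- Let (ξ_k)_{k≥1} be independent centered Gaussians with ξ_k ~ N(0, σ_k²), where σ_k ≤ k / (λ √(log k) (1 - e^{-εk²})) for some λ > √2 and ε > 0. Then almost surely only finitely many k satisfy ξ_k ≥ k/(1 - e^{-εk²}); consequently inf_{k≥1} τ_k > 0 a.s., where τ_k = -k^{-2}log(1 - k/ξ_k) (τ_k = ∞ when ξ_k ≤ k). -/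
/-!
The Chernoff bound for a centered Gaussian of standard deviation `s` gives
`P[ξ ≥ s t] ≤ exp (-t² / 2)`; with `t = λ √(log k)` the events
`ξ_k ≥ k / (1 - e^{-εk²})` have probability at most `k^{-λ²/2}`, which is summable
because `λ² > 2`. By Borel–Cantelli, almost surely only finitely many of them occur.
For every other `k ≥ 1` one has `1 - k/ξ_k < e^{-εk²}`, i.e. `τ_k ≥ ε`, while each of
the finitely many remaining `τ_k` is positive.
-/

open MeasureTheory ProbabilityTheory Real Set
open scoped ENNReal NNReal

/-- Blow-up time `τ_k` of the `k`-th Fourier mode: `τ_k = -k^{-2} log(1 - k/ξ_k)` when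
`ξ_k > k`, and `τ_k = ∞` when `ξ_k ≤ k`. -/
noncomputable def blowupTime (k : ℕ) (x : ℝ) : ℝ≥0∞ :=
  if x ≤ k then ⊤ else ENNReal.ofReal (-(1/(k:ℝ)^2) * Real.log (1 - k / x))

open Filter

lemma hasSubgaussianMGF_id_gaussianReal_of_le {v c : ℝ≥0} (hvc : v ≤ c) :
    HasSubgaussianMGF id c (gaussianReal 0 v) where
  integrable_exp_mul t := integrable_exp_mul_gaussianReal t
  mgf_le t := by
    simp only [mgf_id_gaussianReal, zero_mul, zero_add]
    gcongr

lemma gaussianReal_real_Ici_le {s : ℝ≥0} {a t : ℝ} (ha : 0 < a) (ht : 0 < t)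
    (hst : s * t ≤ a) : (gaussianReal 0 (s ^ 2)).real (Ici a) ≤ exp (-t ^ 2 / 2) := by
  let c : ℝ≥0 := ⟨(a / t) ^ 2, sq_nonneg _⟩
  have hsc : s ^ 2 ≤ c := by
    rw [← NNReal.coe_le_coe, NNReal.coe_pow]
    exact pow_le_pow_left₀ s.2 ((le_div_iff₀ ht).2 hst) 2
  calc (gaussianReal 0 (s ^ 2)).real (Ici a)
      ≤ exp (-a ^ 2 / (2 * (a / t) ^ 2)) :=
        (hasSubgaussianMGF_id_gaussianReal_of_le hsc).measure_ge_le ha.le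
    _ = exp (-t ^ 2 / 2) := by
        congr 1
        field_simp

lemma gaussianReal_real_Ici_le_rpow {s : ℝ≥0} {a lam x : ℝ} (ha : 0 < a) (hlam : 0 < lam)
    (hx : 1 < x) (hs : s * (lam * √(log x)) ≤ a) :
    (gaussianReal 0 (s ^ 2)).real (Ici a) ≤ x ^ (-(lam ^ 2 / 2)) := by
  have hlog : 0 < log x := log_pos hx
  calc (gaussianReal 0 (s ^ 2)).real (Ici a)
      ≤ exp (-(lam * √(log x)) ^ 2 / 2) := gaussianReal_real_Ici_le ha (by positivity) hs
    _ = x ^ (-(lam ^ 2 / 2)) := by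
        rw [rpow_def_of_pos (by linarith), mul_pow, sq_sqrt hlog.le]
        ring_nf

lemma one_sub_exp_neg_mul_sq_pos {ε : ℝ} (hε : 0 < ε) {k : ℕ} (hk : 1 ≤ k) :
    0 < 1 - exp (-ε * k ^ 2) := by
  have hk0 : (0 : ℝ) < k := by exact_mod_cast hk
  rw [sub_pos, exp_lt_one_iff, neg_mul, neg_lt_zero]
  positivity

lemma summable_gaussianReal_real_Ici {σ : ℕ → ℝ≥0} {lam ε : ℝ} (hlam : √2 < lam)
    (hε : 0 < ε) (hσ : ∀ k : ℕ, 2 ≤ k →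
      (σ k : ℝ) ≤ k / (lam * √(log k) * (1 - exp (-ε * k ^ 2)))) :
    Summable fun k : ℕ ↦
      (gaussianReal 0 (σ k ^ 2)).real (Ici (k / (1 - exp (-ε * k ^ 2)))) := by
  have hlam0 : 0 < lam := (sqrt_pos.2 two_pos).trans hlam
  have hlam2 : 2 < lam ^ 2 := (sqrt_lt' hlam0).1 hlam
  refine .of_norm_bounded_eventually_nat (g := fun k : ℕ ↦ (k : ℝ) ^ (-(lam ^ 2 / 2)))
    (summable_nat_rpow.2 (by linarith)) (eventually_atTop.2 ⟨2, fun k hk ↦ ?_⟩)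
  have hk : (2 : ℝ) ≤ k := by exact_mod_cast hk
  have hD := one_sub_exp_neg_mul_sq_pos hε (k := k) (by omega)
  have hL : 0 < lam * √(log k) := mul_pos hlam0 (sqrt_pos.2 (log_pos (by linarith)))
  rw [norm_of_nonneg measureReal_nonneg]
  refine gaussianReal_real_Ici_le_rpow (by positivity) hlam0 (by linarith) ?_
  rw [le_div_iff₀ hD, mul_assoc, ← le_div_iff₀ (by positivity)]
  exact hσ k (by exact_mod_cast hk)

lemma blowupTime_pos {k : ℕ} (hk : 1 ≤ k) (x : ℝ) : 0 < blowupTime k x := by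
  unfold blowupTime
  split_ifs with hxk
  · exact ENNReal.zero_lt_top
  have hk0 : (0 : ℝ) < k := by exact_mod_cast hk
  have hx0 : 0 < x := hk0.trans (not_le.1 hxk)
  have hq : k / x < 1 := (div_lt_one hx0).2 (not_le.1 hxk)
  refine ENNReal.ofReal_pos.2 (mul_pos_of_neg_of_neg (by simp [hk0]) (log_neg ?_ ?_))
  · linarith
  · linarith [div_pos hk0 hx0]

lemma ofReal_le_blowupTime {ε x : ℝ} {k : ℕ} (hε : 0 < ε) (hk : 1 ≤ k)
    (hx : x < k / (1 - exp (-ε * k ^ 2))) : ENNReal.ofReal ε ≤ blowupTime k x := by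
  unfold blowupTime
  split_ifs with hxk
  · exact le_top
  have hk0 : (0 : ℝ) < k := by exact_mod_cast hk
  have hx0 : 0 < x := hk0.trans (not_le.1 hxk)
  have hq : 0 < 1 - k / x := sub_pos.2 ((div_lt_one hx0).2 (not_le.1 hxk))
  have hlt : 1 - k / x < exp (-ε * k ^ 2) := by
    have := (lt_div_iff₀ (one_sub_exp_neg_mul_sq_pos hε hk)).1 hx
    rw [sub_lt_comm, lt_div_iff₀ hx0]
    linarith
  have hlog : log (1 - k / x) < -ε * k ^ 2 := (log_lt_log hq hlt).trans_eq (log_exp _)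
  apply ENNReal.ofReal_le_ofReal
  rw [neg_mul, one_div, ← div_eq_inv_mul, le_neg, div_le_iff₀ (by positivity)]
  linarith

lemma lt_iInf_of_eventually_le {ι α : Type*} [CompleteLinearOrder α] {f : ι → α} {a b : α}
    (hf : ∀ i, a < f i) (hab : a < b) (hb : ∀ᶠ i in cofinite, b ≤ f i) :
    a < ⨅ i, f i := by
  have hS := eventually_cofinite.1 hb
  have hmin : a < min b (hS.toFinset.inf f) :=
    lt_min hab ((Finset.lt_inf_iff (hab.trans_le le_top)).2 fun i _ ↦ hf i)
  refine hmin.trans_le (le_iInf fun i ↦ ?_)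
  by_cases hi : b ≤ f i
  · exact min_le_of_left_le hi
  · exact min_le_of_right_le (Finset.inf_le (hS.mem_toFinset.2 hi))

lemma iInf_blowupTime_pos {ε : ℝ} (hε : 0 < ε) {x : ℕ → ℝ}
    (hx : ∀ᶠ k in cofinite, x k < k / (1 - exp (-ε * k ^ 2))) :
    0 < ⨅ (k : ℕ) (_ : 1 ≤ k), blowupTime k (x k) := by
  refine lt_iInf_of_eventually_le (fun k ↦ ?_) (ENNReal.ofReal_pos.2 hε)
    (hx.mono fun k hk ↦ le_iInf fun h1k ↦ ofReal_le_blowupTime hε h1k hk)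
  by_cases hk : 1 ≤ k
  · rw [iInf_pos hk]
    exact blowupTime_pos hk _
  · rw [iInf_neg hk]
    exact ENNReal.zero_lt_top

theorem stmt14_general {Ω : Type*} [MeasurableSpace Ω] (P : Measure Ω)
    (ξ : ℕ → Ω → ℝ) (σ : ℕ → ℝ≥0) (lam ε : ℝ)
    (hlam : Real.sqrt 2 < lam) (hε : 0 < ε)
    (hlaw : ∀ k, P.map (ξ k) = gaussianReal 0 (σ k ^ 2))
    (hσ : ∀ k : ℕ, 2 ≤ k →
      (σ k : ℝ) ≤ k / (lam * Real.sqrt (Real.log k) * (1 - Real.exp (-ε * k^2)))) :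
    ∀ᵐ ω ∂P,
      {k : ℕ | 1 ≤ k ∧ (k : ℝ) / (1 - Real.exp (-ε * k^2)) ≤ ξ k ω}.Finite ∧
      0 < ⨅ (k : ℕ) (_ : 1 ≤ k), blowupTime k (ξ k ω) := by
  set A : ℕ → ℝ := fun k ↦ k / (1 - exp (-ε * k ^ 2))
  have hP : ∀ k, P {ω | A k ≤ ξ k ω} =
      ENNReal.ofReal ((gaussianReal 0 (σ k ^ 2)).real (Ici (A k))) := by
    intro k
    have hξ : AEMeasurable (ξ k) P := aemeasurable_of_map_neZero (by rw [hlaw k]; infer_instance)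
    rw [ofReal_measureReal, ← hlaw k, Measure.map_apply_of_aemeasurable hξ measurableSet_Ici]
    rfl
  have hsum : ∑' k, P {ω | A k ≤ ξ k ω} ≠ ∞ := by
    have hsummable : Summable fun k ↦ (gaussianReal 0 (σ k ^ 2)).real (Ici (A k)) :=
      summable_gaussianReal_real_Ici hlam hε hσ
    rw [tsum_congr hP, ← ENNReal.ofReal_tsum_of_nonneg (fun _ ↦ measureReal_nonneg) hsummable]
    exact ENNReal.ofReal_ne_top
  filter_upwards [ae_eventually_notMem hsum] with ω hω
  rw [← Nat.cofinite_eq_atTop] at hω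
  exact ⟨(eventually_cofinite.1 hω).subset fun k hk ↦ not_not.2 hk.2,
    iInf_blowupTime_pos hε (hω.mono fun k ↦ not_le.1)⟩

/-- Let `(ξ_k)` be independent centered Gaussians, `ξ_k ~ N(0,σ_k²)` with
`σ_k ≤ k/(λ √(log k) (1 - e^{-εk²}))` for some `λ > √2`, `ε > 0`. Then a.s. only finitely
many `k` satisfy `ξ_k ≥ k/(1-e^{-εk²})`, and consequently `inf_{k≥1} τ_k > 0` a.s. -/
theorem stmt14 {Ω : Type*} [MeasurableSpace Ω] (P : Measure Ω) [IsProbabilityMeasure P]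
    (ξ : ℕ → Ω → ℝ) (σ : ℕ → ℝ≥0) (lam ε : ℝ)
    (hlam : Real.sqrt 2 < lam) (hε : 0 < ε)
    (hmeas : ∀ k, Measurable (ξ k))
    (hindep : iIndepFun ξ P)
    (hlaw : ∀ k, P.map (ξ k) = gaussianReal 0 (σ k ^ 2))
    (hσ : ∀ k : ℕ, 2 ≤ k →
      (σ k : ℝ) ≤ k / (lam * Real.sqrt (Real.log k) * (1 - Real.exp (-ε * k^2)))) :
    ∀ᵐ ω ∂P,
      {k : ℕ | 1 ≤ k ∧ (k : ℝ) / (1 - Real.exp (-ε * k^2)) ≤ ξ k ω}.Finite ∧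
      0 < ⨅ (k : ℕ) (_ : 1 ≤ k), blowupTime k (ξ k ω) :=
  stmt14_general P ξ σ lam ε hlam hε hlaw hσ
end
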